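/- arXiv:1704.05171 — 4 statements merged into one kernel-verified Lean document; each statement's English description precedes it below -/
import Mathlib

section
/- Let F be a field, m ≥ 1, A : Matrix (Fin m) (Fin m × Fin m) F, g an invertible m×m matrix over F, and B = τ(g, A) = g * A * (g⁻¹ ⊗ g⁻¹). Then the m×m matrix with (i,j) entry trace(B_i * B_j) equals (g⁻¹)ᵗ * M * g⁻¹, where M is the m×m matrix with (i,j) entry trace(A_i * A_j). In the paper's notation: T̃r(B^t̄ B) = ((g⁻¹))ᵗ · T̃r(A^t̄ A) · g⁻¹. -/
open Matrix Kronecker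

/-- The `i`-th block of a matrix of structure constants. -/
def blk {F : Type*} {m : ℕ} (A : Matrix (Fin m) (Fin m × Fin m) F) (i : Fin m) :
    Matrix (Fin m) (Fin m) F := fun a b => A a (i, b)

/-- The trace form `T̃r(Aᵗ̄A)` of a matrix of structure constants. -/
def trForm {F : Type*} [Field F] {m : ℕ} (A : Matrix (Fin m) (Fin m × Fin m) F) :
    Matrix (Fin m) (Fin m) F := fun i j => (blk A i * blk A j).trace

/-!
Each block of `g * A * (g⁻¹ ⊗ₖ g⁻¹)` is the combination `∑ j, g⁻¹ j i • (g * A_j * g⁻¹)` of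
conjugates of the blocks of `A`. Since `trace (X * Y)` is invariant under simultaneous
conjugation and bilinear in `(X, Y)`, the trace form transforms as a bilinear form under `g⁻¹`.
-/

section

variable {F : Type*} {m : ℕ}

lemma blk_mul_kronecker [CommSemiring F] (A : Matrix (Fin m) (Fin m × Fin m) F)
    (g h k : Matrix (Fin m) (Fin m) F) (i : Fin m) :
    blk (g * A * (h ⊗ₖ k)) i = ∑ j, h j i • (g * blk A j * k) := by
  ext a b
  simp only [blk, mul_apply, Matrix.sum_apply, Matrix.smul_apply, kroneckerMap_apply,
    Fintype.sum_prod_type, Finset.mul_sum, Finset.sum_mul, smul_eq_mul]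
  refine Finset.sum_congr rfl fun j _ => Finset.sum_congr rfl fun l _ =>
    Finset.sum_congr rfl fun c _ => ?_
  ring

lemma trace_conj_mul_conj [CommSemiring F] {g k : Matrix (Fin m) (Fin m) F} (hkg : k * g = 1)
    (X Y : Matrix (Fin m) (Fin m) F) :
    (g * X * k * (g * Y * k)).trace = (X * Y).trace := by
  calc (g * X * k * (g * Y * k)).trace = (g * (X * (k * g) * Y) * k).trace := by
        simp only [Matrix.mul_assoc]
    _ = (X * Y).trace := by
        rw [hkg, Matrix.mul_one, trace_mul_comm, ← Matrix.mul_assoc, hkg, Matrix.one_mul]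

lemma trForm_mul_kronecker [Field F] (A : Matrix (Fin m) (Fin m × Fin m) F)
    {g k : Matrix (Fin m) (Fin m) F} (hkg : k * g = 1) :
    trForm (g * A * (k ⊗ₖ k)) = kᵀ * trForm A * k := by
  ext i j
  simp only [trForm, blk_mul_kronecker, Finset.sum_mul, Finset.mul_sum, Matrix.smul_mul,
    Matrix.mul_smul, trace_sum, trace_smul, smul_eq_mul, mul_apply, transpose_apply, trace_conj_mul_conj hkg]
  refine Finset.sum_congr rfl fun p _ => Finset.sum_congr rfl fun q _ => ?_
  ring

end

theorem stmt_3_general (F : Type*) [Field F] (m : ℕ)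
    (A : Matrix (Fin m) (Fin m × Fin m) F)
    (g : Matrix (Fin m) (Fin m) F) (hg : IsUnit g)
    (B : Matrix (Fin m) (Fin m × Fin m) F)
    (hB : B = g * A * (g⁻¹ ⊗ₖ g⁻¹)) :
    trForm B = (g⁻¹)ᵀ * trForm A * g⁻¹ := by
  rw [hB]
  exact trForm_mul_kronecker A (nonsing_inv_mul g ((isUnit_iff_isUnit_det g).mp hg))

theorem stmt_3 (F : Type*) [Field F] (m : ℕ) (hm : 1 ≤ m)
    (A : Matrix (Fin m) (Fin m × Fin m) F)
    (g : Matrix (Fin m) (Fin m) F) (hg : IsUnit g)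
    (B : Matrix (Fin m) (Fin m × Fin m) F)
    (hB : B = g * A * (g⁻¹ ⊗ₖ g⁻¹)) :
    trForm B = (g⁻¹)ᵀ * trForm A * g⁻¹ :=
  stmt_3_general F m A g hg B hB
end

section
/- Let F be a field, m ≥ 1, A, B : Matrix (Fin m) (Fin m × Fin m) F, and let Q_A, Q_B, g be invertible m×m matrices over F with B = τ(g, A). Set Ā = τ(Q_A, A), B̄ = τ(Q_B, B), D_A = (Q_A⁻¹)ᵗ * T̃r(A^t̄ A) * Q_A⁻¹ and D_B = (Q_B⁻¹)ᵗ * T̃r(B^t̄ B) * Q_B⁻¹. Then g₀ := Q_B * g * Q_A⁻¹ satisfies B̄ = τ(g₀, Ā) and g₀ᵗ * D_B * g₀ = D_A. (Forward direction of Theorem 2 with explicit witness.) -/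
/-!
The trace form is covariant under the action: the blocks of `τ(g, A)` are the conjugates
`g A_j g⁻¹` recombined by the columns of `g⁻¹`, and conjugation does not change traces of
products, so `T̃r(τ(g, A)) = (g⁻¹)ᵀ T̃r(A) g⁻¹`. With `Ā = τ(Q_A, A)` and `B̄ = τ(Q_B, B)` this
identifies `D_A = T̃r(Ā)` and `D_B = T̃r(B̄)`; since `B̄ = τ(g₀, Ā)` by the cocycle rule
`τ(gh, A) = τ(g, τ(h, A))`, covariance for `g₀` gives `g₀ᵀ D_B g₀ = D_A`.
-/

open Matrix Kronecker

/-- The action `τ(g, A) = g * A * (g⁻¹ ⊗ g⁻¹)` on matrices of structure constants. -/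
noncomputable def tau {F : Type*} [Field F] {m : ℕ} (g : Matrix (Fin m) (Fin m) F)
    (A : Matrix (Fin m) (Fin m × Fin m) F) : Matrix (Fin m) (Fin m × Fin m) F :=
  g * A * (g⁻¹ ⊗ₖ g⁻¹)

theorem Matrix.trace_conj_mul_conj {n R : Type*} [Fintype n] [DecidableEq n] [CommRing R]
    {g : Matrix n n R} (hg : IsUnit g) (X Y : Matrix n n R) :
    trace (g * X * g⁻¹ * (g * Y * g⁻¹)) = trace (X * Y) := by
  have hdet : IsUnit g.det := (isUnit_iff_isUnit_det g).mp hg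
  have hcollapse : g * X * g⁻¹ * (g * Y * g⁻¹) = g * (X * Y) * g⁻¹ := by
    simp only [Matrix.mul_assoc, nonsing_inv_mul_cancel_left _ _ hdet]
  rw [hcollapse, trace_conj hg]

section StructureConstants

variable {F : Type*} [Field F] {m : ℕ}

theorem tau_mul (g h : Matrix (Fin m) (Fin m) F) (A : Matrix (Fin m) (Fin m × Fin m) F) :
    tau (g * h) A = tau g (tau h A) := by
  simp only [tau, Matrix.mul_inv_rev, ← mul_kronecker_mul, Matrix.mul_assoc]

theorem tau_mul_nonsing_inv_tau {Q : Matrix (Fin m) (Fin m) F} (hQ : IsUnit Q)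
    (h : Matrix (Fin m) (Fin m) F) (A : Matrix (Fin m) (Fin m × Fin m) F) :
    tau (h * Q⁻¹) (tau Q A) = tau h A := by
  rw [← tau_mul, nonsing_inv_mul_cancel_right _ _ ((isUnit_iff_isUnit_det Q).mp hQ)]

theorem blk_tau (g : Matrix (Fin m) (Fin m) F) (A : Matrix (Fin m) (Fin m × Fin m) F)
    (i : Fin m) : blk (tau g A) i = ∑ j, g⁻¹ j i • (g * blk A j * g⁻¹) := by
  ext a b
  simp only [blk, tau, mul_apply, kroneckerMap_apply, Matrix.sum_apply, Matrix.smul_apply,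
    smul_eq_mul, Fintype.sum_prod_type, Finset.mul_sum, Finset.sum_mul]
  refine Finset.sum_congr rfl fun j _ => Finset.sum_congr rfl fun d _ =>
    Finset.sum_congr rfl fun c _ => ?_
  ring

theorem trForm_tau {g : Matrix (Fin m) (Fin m) F} (hg : IsUnit g)
    (A : Matrix (Fin m) (Fin m × Fin m) F) :
    trForm (tau g A) = (g⁻¹)ᵀ * trForm A * g⁻¹ := by
  ext i k
  simp only [trForm, blk_tau, mul_apply, transpose_apply, trace_sum,
    smul_mul_assoc, mul_smul_comm, trace_smul, smul_eq_mul, trace_conj_mul_conj hg,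
    Finset.sum_mul, Finset.mul_sum]
  refine Finset.sum_congr rfl fun j _ => Finset.sum_congr rfl fun l _ => ?_
  ring

theorem transpose_mul_trForm_tau_mul {g : Matrix (Fin m) (Fin m) F} (hg : IsUnit g)
    (A : Matrix (Fin m) (Fin m × Fin m) F) :
    gᵀ * trForm (tau g A) * g = trForm A := by
  have hdet : IsUnit g.det := (isUnit_iff_isUnit_det g).mp hg
  rw [trForm_tau hg, ← Matrix.mul_assoc, ← Matrix.mul_assoc, ← transpose_mul,
    nonsing_inv_mul _ hdet, transpose_one, Matrix.one_mul,
    nonsing_inv_mul_cancel_right _ _ hdet]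

end StructureConstants

theorem stmt_8_general (F : Type*) [Field F] (m : ℕ)
    (A B : Matrix (Fin m) (Fin m × Fin m) F)
    (QA QB g : Matrix (Fin m) (Fin m) F)
    (hQA : IsUnit QA) (hQB : IsUnit QB) (hg : IsUnit g)
    (hB : B = tau g A)
    (Abar Bbar : Matrix (Fin m) (Fin m × Fin m) F)
    (hAbar : Abar = tau QA A) (hBbar : Bbar = tau QB B)
    (DA DB : Matrix (Fin m) (Fin m) F)
    (hDA : DA = (QA⁻¹)ᵀ * trForm A * QA⁻¹) (hDB : DB = (QB⁻¹)ᵀ * trForm B * QB⁻¹) :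
    Bbar = tau (QB * g * QA⁻¹) Abar ∧ (QB * g * QA⁻¹)ᵀ * DB * (QB * g * QA⁻¹) = DA := by
  have hBbar_eq : Bbar = tau (QB * g * QA⁻¹) Abar := by
    rw [hBbar, hB, hAbar, tau_mul_nonsing_inv_tau hQA, tau_mul]
  have hg₀ : IsUnit (QB * g * QA⁻¹) := (hQB.mul hg).mul (isUnit_nonsing_inv_iff.mpr hQA)
  refine ⟨hBbar_eq, ?_⟩
  rw [hDA, hDB, ← trForm_tau hQA, ← trForm_tau hQB, ← hAbar, ← hBbar, hBbar_eq,
    transpose_mul_trForm_tau_mul hg₀]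

theorem stmt_8 (F : Type*) [Field F] (m : ℕ) (hm : 1 ≤ m)
    (A B : Matrix (Fin m) (Fin m × Fin m) F)
    (QA QB g : Matrix (Fin m) (Fin m) F)
    (hQA : IsUnit QA) (hQB : IsUnit QB) (hg : IsUnit g)
    (hB : B = tau g A)
    (Abar Bbar : Matrix (Fin m) (Fin m × Fin m) F)
    (hAbar : Abar = tau QA A) (hBbar : Bbar = tau QB B)
    (DA DB : Matrix (Fin m) (Fin m) F)
    (hDA : DA = (QA⁻¹)ᵀ * trForm A * QA⁻¹) (hDB : DB = (QB⁻¹)ᵀ * trForm B * QB⁻¹) :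
    Bbar = tau (QB * g * QA⁻¹) Abar ∧ (QB * g * QA⁻¹)ᵀ * DB * (QB * g * QA⁻¹) = DA :=
  stmt_8_general F m A B QA QB g hQA hQB hg hB Abar Bbar hAbar hBbar DA DB hDA hDB
end

section
/- Let F be a field, m ≥ 1, Ā : Matrix (Fin m) (Fin m × Fin m) F, C an invertible m×m matrix over F, and g an invertible m×m matrix over F. Set B̄ = g * Ā * (g⁻¹ ⊗ g⁻¹) and C̃ = g * C * gᵗ. Then B̄ * (C̃ ⊗ C̃) * B̄ᵗ * C̃⁻¹ * B̄ = g * (Ā * (C ⊗ C) * Āᵗ * C⁻¹ * Ā) * (g⁻¹ ⊗ g⁻¹); that is, the m×m² matrix Ā * (C ⊗ C) * Āᵗ * C⁻¹ * Ā transforms under τ(g, ·) in the same way as Ā itself. -/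
open Matrix Kronecker

/-! Since `C̃ ⊗ C̃ = (g ⊗ g) (C ⊗ C) (g ⊗ g)ᵀ`, the factors `g⁻¹ ⊗ g⁻¹` of `B̄` cancel and
`B̄ (C̃ ⊗ C̃) B̄ᵀ = g (Ā (C ⊗ C) Āᵀ) gᵀ`; multiplying by `C̃⁻¹ = g⁻ᵀ C⁻¹ g⁻¹` and then by `B̄`
cancels the remaining copies of `g`. -/

namespace Matrix

variable {R l m n k : Type*} [CommRing R]

theorem mul_mul_mul_transpose_of_mul_eq_one [Fintype m] [Fintype n] [DecidableEq n]
    (g : Matrix l m R) (A : Matrix m n R) (D P Q : Matrix n n R) (hPQ : P * Q = 1) :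
    (g * A * P) * (Q * D * Qᵀ) * (g * A * P)ᵀ = g * (A * D * Aᵀ) * gᵀ := by
  have hQP : Qᵀ * Pᵀ = 1 := by rw [← transpose_mul, hPQ, transpose_one]
  calc (g * A * P) * (Q * D * Qᵀ) * (g * A * P)ᵀ
      = g * A * (P * Q) * D * (Qᵀ * Pᵀ) * Aᵀ * gᵀ := by
        simp only [transpose_mul, Matrix.mul_assoc]
    _ = g * (A * D * Aᵀ) * gᵀ := by
        simp only [hPQ, hQP, Matrix.mul_one, Matrix.mul_assoc]

theorem congruence_mul_inv_congruence_mul [Fintype m] [DecidableEq m] [Fintype n]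
    {g : Matrix m m R} (hg : IsUnit g) (M C : Matrix m m R) (A : Matrix m n R)
    (P : Matrix n k R) :
    (g * M * gᵀ) * (g * C * gᵀ)⁻¹ * (g * A * P) = g * (M * C⁻¹ * A) * P := by
  have hg' : IsUnit g.det := (isUnit_iff_isUnit_det g).mp hg
  have hgt : IsUnit gᵀ.det := by rwa [det_transpose]
  calc (g * M * gᵀ) * (g * C * gᵀ)⁻¹ * (g * A * P)
      = g * M * (gᵀ * gᵀ⁻¹) * C⁻¹ * (g⁻¹ * g) * A * P := by
        simp only [mul_inv_rev, Matrix.mul_assoc]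
    _ = g * (M * C⁻¹ * A) * P := by
        simp only [mul_nonsing_inv _ hgt, nonsing_inv_mul _ hg', Matrix.mul_one,
          Matrix.mul_assoc]

theorem kronecker_congruence_self [Fintype m] (g C : Matrix m m R) :
    (g * C * gᵀ) ⊗ₖ (g * C * gᵀ) = (g ⊗ₖ g) * (C ⊗ₖ C) * (g ⊗ₖ g)ᵀ := by
  rw [mul_kronecker_mul, mul_kronecker_mul, kroneckerMap_transpose]

theorem inv_kronecker_inv_mul_kronecker [Fintype m] [DecidableEq m]
    {g : Matrix m m R} (hg : IsUnit g) : (g⁻¹ ⊗ₖ g⁻¹) * (g ⊗ₖ g) = 1 := by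
  rw [← mul_kronecker_mul, nonsing_inv_mul _ ((isUnit_iff_isUnit_det g).mp hg),
    one_kronecker_one]

end Matrix

theorem stmt_15_general (F : Type*) [Field F] (m : ℕ)
    (Abar : Matrix (Fin m) (Fin m × Fin m) F)
    (C : Matrix (Fin m) (Fin m) F)
    (g : Matrix (Fin m) (Fin m) F) (hg : IsUnit g)
    (Bbar : Matrix (Fin m) (Fin m × Fin m) F)
    (hBbar : Bbar = g * Abar * (g⁻¹ ⊗ₖ g⁻¹))
    (Ctilde : Matrix (Fin m) (Fin m) F) (hCt : Ctilde = g * C * gᵀ) :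
    Bbar * (Ctilde ⊗ₖ Ctilde) * Bbarᵀ * Ctilde⁻¹ * Bbar =
      g * (Abar * (C ⊗ₖ C) * Abarᵀ * C⁻¹ * Abar) * (g⁻¹ ⊗ₖ g⁻¹) := by
  subst hBbar hCt
  rw [kronecker_congruence_self, mul_mul_mul_transpose_of_mul_eq_one _ _ _ _ _
    (inv_kronecker_inv_mul_kronecker hg)]
  exact congruence_mul_inv_congruence_mul hg _ _ _ _

theorem stmt_15 (F : Type*) [Field F] (m : ℕ) (hm : 1 ≤ m)
    (Abar : Matrix (Fin m) (Fin m × Fin m) F)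
    (C : Matrix (Fin m) (Fin m) F) (hC : IsUnit C)
    (g : Matrix (Fin m) (Fin m) F) (hg : IsUnit g)
    (Bbar : Matrix (Fin m) (Fin m × Fin m) F)
    (hBbar : Bbar = g * Abar * (g⁻¹ ⊗ₖ g⁻¹))
    (Ctilde : Matrix (Fin m) (Fin m) F) (hCt : Ctilde = g * C * gᵀ) :
    Bbar * (Ctilde ⊗ₖ Ctilde) * Bbarᵀ * Ctilde⁻¹ * Bbar =
      g * (Abar * (C ⊗ₖ C) * Abarᵀ * C⁻¹ * Abar) * (g⁻¹ ⊗ₖ g⁻¹) :=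
  stmt_15_general F m Abar C g hg Bbar hBbar Ctilde hCt
end

section
/- Let F be a field, m ≥ 1, Ā : Matrix (Fin m) (Fin m × Fin m) F, C an invertible m×m matrix over F, and g an invertible m×m matrix over F. Set B̄ = g * Ā * (g⁻¹ ⊗ g⁻¹) and C̃ = g * C * gᵗ. Then for i = 1, 2: Tr_i(B̄ * (C̃ ⊗ C̃) * B̄ᵗ * C̃⁻¹ * B̄) = Tr_i(Ā * (C ⊗ C) * Āᵗ * C⁻¹ * Ā) ᵥ* g⁻¹, where ᵥ* denotes multiplication of a row vector by a matrix; i.e., the rows Tr_i(Ā (C)^{⊗2} Āᵗ C⁻¹ Ā) transform by right multiplication by g⁻¹ and hence can be used to build the matrix P with property (1). -/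
open Matrix Kronecker

/-- The first partial trace `Tr₁(X)`, a row vector with `j`-th entry `∑ i, X i (i, j)`. -/
def tr1 {F : Type*} [Field F] {m : ℕ} (X : Matrix (Fin m) (Fin m × Fin m) F) :
    Fin m → F := fun j => ∑ i : Fin m, X i (i, j)

/-- The second partial trace `Tr₂(X)`, a row vector with `j`-th entry `∑ i, X i (j, i)`. -/
def tr2 {F : Type*} [Field F] {m : ℕ} (X : Matrix (Fin m) (Fin m × Fin m) F) :
    Fin m → F := fun j => ∑ i : Fin m, X i (j, i)

/-! Under `Ā ↦ g Ā (g⁻¹ ⊗ g⁻¹)`, `C ↦ g C gᵀ` the matrix `Ā (C ⊗ C) Āᵀ C⁻¹ Ā` transforms like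
`Ā` itself, since the factors `g ⊗ g`, `gᵀ` and `g` introduced by `C̃` and `B̄` cancel against
their inverses. A partial trace of `g X (h ⊗ h)` with `h g = 1` is the partial trace of `X`
multiplied by `h`, since the contracted tensor factor `h` absorbs the row factor `g`. -/

section PartialTrace

variable {F : Type*} [Field F] {m : ℕ} (g h : Matrix (Fin m) (Fin m) F)
  (X : Matrix (Fin m) (Fin m × Fin m) F)

-- Without the ascriptions on `1`, `X * (1 ⊗ₖ h)` elaborates through the `CStarMatrix` product.

lemma tr1_mul_one_kronecker :
    tr1 (X * ((1 : Matrix (Fin m) (Fin m) F) ⊗ₖ h)) = tr1 X ᵥ* h := by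
  funext j
  simp only [tr1, vecMul, dotProduct, mul_apply, kroneckerMap_apply, one_apply, ite_mul, one_mul,
    zero_mul, mul_ite, mul_zero, Fintype.sum_prod_type, Finset.sum_ite_irrel, Finset.sum_const_zero,
    Finset.sum_ite_eq', Finset.mem_univ, if_true, Finset.sum_mul]
  rw [Finset.sum_comm]

lemma tr2_mul_kronecker_one :
    tr2 (X * (h ⊗ₖ (1 : Matrix (Fin m) (Fin m) F))) = tr2 X ᵥ* h := by
  funext j
  simp only [tr2, vecMul, dotProduct, mul_apply, kroneckerMap_apply, one_apply, mul_ite, mul_one,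
    mul_zero, Fintype.sum_prod_type, Finset.sum_ite_eq', Finset.mem_univ, if_true, Finset.sum_mul]
  rw [Finset.sum_comm]

lemma tr1_mul_mul_kronecker_one :
    tr1 (g * X * (h ⊗ₖ (1 : Matrix (Fin m) (Fin m) F))) = tr1 (h * g * X) := by
  funext j
  simp only [tr1, mul_apply, kroneckerMap_apply, one_apply, mul_ite, mul_one, mul_zero,
    Finset.sum_mul, Fintype.sum_prod_type, Finset.sum_ite_eq', Finset.mem_univ, if_true]
  rw [Finset.sum_comm]
  refine Finset.sum_congr rfl fun a _ => ?_
  rw [Finset.sum_comm]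
  exact Finset.sum_congr rfl fun b _ => Finset.sum_congr rfl fun i _ => by ring

lemma tr2_mul_mul_one_kronecker :
    tr2 (g * X * ((1 : Matrix (Fin m) (Fin m) F) ⊗ₖ h)) = tr2 (h * g * X) := by
  funext j
  simp only [tr2, mul_apply, kroneckerMap_apply, one_apply, ite_mul, one_mul, zero_mul, mul_ite,
    Finset.sum_mul, mul_zero, Fintype.sum_prod_type, Finset.sum_ite_irrel, Finset.sum_const_zero,
    Finset.sum_ite_eq', Finset.mem_univ, if_true]
  rw [Finset.sum_comm]
  refine Finset.sum_congr rfl fun a _ => ?_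
  rw [Finset.sum_comm]
  exact Finset.sum_congr rfl fun b _ => Finset.sum_congr rfl fun i _ => by ring

variable {g h}

lemma tr1_mul_mul_kronecker_self (hhg : h * g = 1) :
    tr1 (g * X * (h ⊗ₖ h)) = tr1 X ᵥ* h := by
  have hsplit : h ⊗ₖ h =
      (h ⊗ₖ (1 : Matrix (Fin m) (Fin m) F)) * ((1 : Matrix (Fin m) (Fin m) F) ⊗ₖ h) := by
    rw [← mul_kronecker_mul, Matrix.mul_one, Matrix.one_mul]
  rw [hsplit, ← Matrix.mul_assoc, tr1_mul_one_kronecker, tr1_mul_mul_kronecker_one, hhg,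
    Matrix.one_mul]

lemma tr2_mul_mul_kronecker_self (hhg : h * g = 1) :
    tr2 (g * X * (h ⊗ₖ h)) = tr2 X ᵥ* h := by
  have hsplit : h ⊗ₖ h =
      ((1 : Matrix (Fin m) (Fin m) F) ⊗ₖ h) * (h ⊗ₖ (1 : Matrix (Fin m) (Fin m) F)) := by
    rw [← mul_kronecker_mul, Matrix.mul_one, Matrix.one_mul]
  rw [hsplit, ← Matrix.mul_assoc, tr2_mul_kronecker_one, tr2_mul_mul_one_kronecker, hhg,
    Matrix.one_mul]

end PartialTrace

section Covariance

variable {R : Type*} [CommRing R] {n : Type*} [Fintype n] [DecidableEq n]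
  {g : Matrix n n R} (A : Matrix n (n × n) R) (C : Matrix n n R)

lemma conj_mul_kronecker_congr_mul_transpose (hg : IsUnit g) :
    g * A * (g⁻¹ ⊗ₖ g⁻¹) * ((g * C * gᵀ) ⊗ₖ (g * C * gᵀ)) * (g * A * (g⁻¹ ⊗ₖ g⁻¹))ᵀ =
      g * (A * (C ⊗ₖ C) * Aᵀ) * gᵀ := by
  have hgd : IsUnit g.det := (isUnit_iff_isUnit_det g).mp hg
  have hinv : (g⁻¹ ⊗ₖ g⁻¹) * (g ⊗ₖ g) = 1 := by
    rw [← mul_kronecker_mul, nonsing_inv_mul g hgd, one_kronecker_one]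
  have hinvT : (gᵀ ⊗ₖ gᵀ) * (g⁻¹ ⊗ₖ g⁻¹)ᵀ = 1 := by
    rw [kroneckerMap_transpose, ← transpose_mul, hinv, transpose_one]
  have hkron : (g * C * gᵀ) ⊗ₖ (g * C * gᵀ) = (g ⊗ₖ g) * (C ⊗ₖ C) * (gᵀ ⊗ₖ gᵀ) := by
    rw [mul_kronecker_mul, mul_kronecker_mul]
  calc _ = g * A * ((g⁻¹ ⊗ₖ g⁻¹) * (g ⊗ₖ g)) * (C ⊗ₖ C) *
          ((gᵀ ⊗ₖ gᵀ) * (g⁻¹ ⊗ₖ g⁻¹)ᵀ) * Aᵀ * gᵀ := by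
        rw [hkron]; simp only [transpose_mul, Matrix.mul_assoc]
    _ = _ := by rw [hinv, hinvT]; simp only [Matrix.mul_one, Matrix.mul_assoc]

lemma congr_inv_mul_conj (hg : IsUnit g) :
    (g * C * gᵀ)⁻¹ * (g * A * (g⁻¹ ⊗ₖ g⁻¹)) = gᵀ⁻¹ * (C⁻¹ * A) * (g⁻¹ ⊗ₖ g⁻¹) := by
  rw [Matrix.mul_inv_rev, Matrix.mul_inv_rev]
  have hgd : IsUnit g.det := (isUnit_iff_isUnit_det g).mp hg
  simp only [Matrix.mul_assoc, nonsing_inv_mul_cancel_left _ _ hgd]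

lemma mul_kronecker_mul_transpose_mul_inv_mul_conj (hg : IsUnit g) :
    g * A * (g⁻¹ ⊗ₖ g⁻¹) * ((g * C * gᵀ) ⊗ₖ (g * C * gᵀ)) * (g * A * (g⁻¹ ⊗ₖ g⁻¹))ᵀ *
        (g * C * gᵀ)⁻¹ * (g * A * (g⁻¹ ⊗ₖ g⁻¹)) =
      g * (A * (C ⊗ₖ C) * Aᵀ * C⁻¹ * A) * (g⁻¹ ⊗ₖ g⁻¹) := by
  have hgT : IsUnit gᵀ.det := by rwa [det_transpose, ← isUnit_iff_isUnit_det]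
  rw [Matrix.mul_assoc _ (g * C * gᵀ)⁻¹, conj_mul_kronecker_congr_mul_transpose A C hg,
    congr_inv_mul_conj A C hg]
  simp only [Matrix.mul_assoc, mul_nonsing_inv_cancel_left _ _ hgT]

end Covariance

theorem stmt_16_general (F : Type*) [Field F] (m : ℕ)
    (Abar : Matrix (Fin m) (Fin m × Fin m) F)
    (C : Matrix (Fin m) (Fin m) F)
    (g : Matrix (Fin m) (Fin m) F) (hg : IsUnit g)
    (Bbar : Matrix (Fin m) (Fin m × Fin m) F)
    (hBbar : Bbar = g * Abar * (g⁻¹ ⊗ₖ g⁻¹))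
    (Ctilde : Matrix (Fin m) (Fin m) F) (hCt : Ctilde = g * C * gᵀ) :
    tr1 (Bbar * (Ctilde ⊗ₖ Ctilde) * Bbarᵀ * Ctilde⁻¹ * Bbar) =
        tr1 (Abar * (C ⊗ₖ C) * Abarᵀ * C⁻¹ * Abar) ᵥ* g⁻¹ ∧
      tr2 (Bbar * (Ctilde ⊗ₖ Ctilde) * Bbarᵀ * Ctilde⁻¹ * Bbar) =
        tr2 (Abar * (C ⊗ₖ C) * Abarᵀ * C⁻¹ * Abar) ᵥ* g⁻¹ := by
  have hgg : g⁻¹ * g = 1 := nonsing_inv_mul g ((isUnit_iff_isUnit_det g).mp hg)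
  subst hBbar hCt
  rw [mul_kronecker_mul_transpose_mul_inv_mul_conj Abar C hg]
  exact ⟨tr1_mul_mul_kronecker_self _ hgg, tr2_mul_mul_kronecker_self _ hgg⟩

theorem stmt_16 (F : Type*) [Field F] (m : ℕ) (hm : 1 ≤ m)
    (Abar : Matrix (Fin m) (Fin m × Fin m) F)
    (C : Matrix (Fin m) (Fin m) F) (hC : IsUnit C)
    (g : Matrix (Fin m) (Fin m) F) (hg : IsUnit g)
    (Bbar : Matrix (Fin m) (Fin m × Fin m) F)
    (hBbar : Bbar = g * Abar * (g⁻¹ ⊗ₖ g⁻¹))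
    (Ctilde : Matrix (Fin m) (Fin m) F) (hCt : Ctilde = g * C * gᵀ) :
    tr1 (Bbar * (Ctilde ⊗ₖ Ctilde) * Bbarᵀ * Ctilde⁻¹ * Bbar) =
        tr1 (Abar * (C ⊗ₖ C) * Abarᵀ * C⁻¹ * Abar) ᵥ* g⁻¹ ∧
      tr2 (Bbar * (Ctilde ⊗ₖ Ctilde) * Bbarᵀ * Ctilde⁻¹ * Bbar) =
        tr2 (Abar * (C ⊗ₖ C) * Abarᵀ * C⁻¹ * Abar) ᵥ* g⁻¹ :=
  stmt_16_general F m Abar C g hg Bbar hBbar Ctilde hCt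
end
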